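/- (Pinned distance set lower bound.) Let q be an odd prime power and P ⊆ F_q^n with |P| ≥ (√(1−ε)/ε)(q^{(n+1)/2} − q^{(n−1)/2}) for some 0 < ε < 1. Define Δ(P,y) = {Σ_{i=1}^n (x_i − y_i)^2 : x ∈ P}. Then (1/|P|) Σ_{y ∈ P} |Δ(P,y)| ≥ (1 − ε)q. -/

import Mathlib

/-!
Write `‖z‖ = ∑ zᵢ²` (`sqDist x y = ‖x - y‖`) and let
`C = ∑_{y ∈ P} #{(x, x') ∈ P² | ‖x - y‖ = ‖x' - y‖}` count pinned collisions. Cauchy–Schwarz,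
first over the fibres of `x ↦ ‖x - y‖` and then over the pins, gives `|P|⁴ ≤ C ∑_y |Δ(P, y)|`.
Detecting `‖x - y‖ = ‖x' - y‖` with a primitive additive character `ψ` turns `q C` into
`∑_t ∑_y |∑_{x ∈ P} ψ(t ‖x - y‖)|²`. The frequency `t = 0` contributes `|P|³`; for `t ≠ 0`,
`‖x - y‖ - ‖x' - y‖` is affine in `y` with linear part `2 (x' - x)`, so (as `q` is odd)
orthogonality over all `y ∈ F_q^n` bounds that frequency by `q^n |P|`. Hence
`q C ≤ |P|³ + (q - 1) q^n |P|`, and the size assumption on `P` makes the second term at most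
`ε/(1 - ε) |P|³` unless `(1 - ε) q ≤ 1`, where the bound is trivial.
-/

open Finset

section Collisions

variable {α β : Type*} [DecidableEq β]

def collisions (s : Finset α) (f : α → β) : ℕ := #{p ∈ s ×ˢ s | f p.1 = f p.2}

lemma collisions_eq_sum_sq (s : Finset α) (f : α → β) :
    collisions s f = ∑ c ∈ s.image f, #{x ∈ s | f x = c} ^ 2 := by
  rw [collisions, card_eq_sum_card_fiberwise (f := fun p => f p.1) (t := s.image f)]
  · refine sum_congr rfl fun c _ => ?_
    rw [sq, ← card_product]
    congr 1
    ext ⟨x, x'⟩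
    simp only [mem_filter, mem_product]
    grind
  · intro p hp
    exact mem_image_of_mem f (mem_product.1 (mem_filter.1 hp).1).1

lemma collisions_eq_sum_ite (s : Finset α) (f : α → β) :
    collisions s f = ∑ x ∈ s, ∑ x' ∈ s, if f x = f x' then 1 else 0 := by
  rw [collisions, card_filter, sum_product]

lemma sq_card_le_card_image_mul_collisions (s : Finset α) (f : α → β) :
    #s ^ 2 ≤ #(s.image f) * collisions s f := by
  calc #s ^ 2 = (∑ c ∈ s.image f, #{x ∈ s | f x = c}) ^ 2 := by
        rw [card_eq_sum_card_image f s]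
    _ ≤ #(s.image f) * ∑ c ∈ s.image f, #{x ∈ s | f x = c} ^ 2 := sq_sum_le_card_mul_sum_sq
    _ = #(s.image f) * collisions s f := by rw [collisions_eq_sum_sq]

lemma sq_card_mul_card_le_sum_card_image_mul_sum_collisions {α β γ : Type*} [DecidableEq β]
    (P : Finset α) (Y : Finset γ) (f : γ → α → β) :
    (#Y * #P) ^ 2 ≤ (∑ y ∈ Y, #(P.image (f y))) * ∑ y ∈ Y, collisions P (f y) := by
  rw [← smul_eq_mul, ← sum_const]
  exact sum_sq_le_sum_mul_sum_of_sq_le_mul Y (fun _ _ => Nat.zero_le _) (fun _ _ => Nat.zero_le _)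
    fun y _ => sq_card_le_card_image_mul_collisions P (f y)

end Collisions

lemma two_ne_zero_of_odd_card {F : Type*} [Field F] [Fintype F] (h : Odd (Fintype.card F)) :
    (2 : F) ≠ 0 :=
  Ring.two_ne_zero fun h2 => Nat.not_even_iff_odd.2 h
    (Nat.even_iff.2 (FiniteField.even_card_iff_char_two.1 h2))

namespace AddChar

section Domain

variable {R R' : Type*} [CommRing R] [Fintype R] [DecidableEq R] [CommRing R'] [IsDomain R']

lemma sum_apply_dotProduct {ι : Type*} [Fintype ι] [DecidableEq ι] {ψ : AddChar R R'}
    (hψ : ψ.IsPrimitive) (b : ι → R) :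
    ∑ y, ψ (b ⬝ᵥ y) = if b = 0 then (Fintype.card R : R') ^ Fintype.card ι else 0 := by
  let χ : AddChar (ι → R) R' :=
    { toFun := fun y => ψ (b ⬝ᵥ y)
      map_zero_eq_one' := by simp
      map_add_eq_mul' := fun y z => by rw [dotProduct_add, map_add_eq_mul] }
  classical
  rw [show ∑ y, ψ (b ⬝ᵥ y) = ∑ y, χ y from rfl, sum_eq_ite]
  have hχ : χ = 0 ↔ b = 0 := by
    refine ⟨fun h => ?_, fun h => by ext y; simp [χ, h]⟩
    by_contra hb
    obtain ⟨i, hi⟩ := Function.ne_iff.1 hb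
    obtain ⟨a, ha⟩ := ne_zero_iff.1 (hψ hi)
    refine ha ?_
    simpa [χ, dotProduct_single] using DFunLike.congr_fun h (Pi.single i a)
  simp only [hχ, Fintype.card_fun, Nat.cast_pow]

end Domain

variable {R : Type*} [CommRing R] [Fintype R]

lemma normSq_sum_apply {α : Type*} (ψ : AddChar R ℂ) (s : Finset α) (g : α → R) :
    (Complex.normSq (∑ x ∈ s, ψ (g x)) : ℂ) = ∑ x ∈ s, ∑ x' ∈ s, ψ (g x - g x') := by
  have hR : 0 < ringChar R := Nat.pos_of_ne_zero (CharP.ringChar_ne_zero_of_finite R)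
  rw [← Complex.mul_conj, map_sum, sum_mul_sum]
  simp only [starComp_apply hR, inv_apply, ← map_add_eq_mul, sub_eq_add_neg]

lemma sum_normSq_sum_apply_mul [DecidableEq R] {α : Type*} {ψ : AddChar R ℂ}
    (hψ : ψ.IsPrimitive) (s : Finset α) (g : α → R) :
    ∑ t, Complex.normSq (∑ x ∈ s, ψ (t * g x)) = Fintype.card R * collisions s g := by
  suffices h : ∑ t, (Complex.normSq (∑ x ∈ s, ψ (t * g x)) : ℂ) =
      Fintype.card R * collisions s g by exact_mod_cast h
  simp_rw [normSq_sum_apply, ← mul_sub]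
  rw [sum_comm, collisions_eq_sum_ite, Nat.cast_sum, mul_sum]
  refine sum_congr rfl fun x _ => ?_
  rw [sum_comm, Nat.cast_sum, mul_sum]
  refine sum_congr rfl fun x' _ => ?_
  simp [sum_mulShift _ hψ, sub_eq_zero]

end AddChar

section SqDist

variable {ι : Type*} [Fintype ι]

def sqDist {R : Type*} [CommRing R] (x y : ι → R) : R := ∑ i, (x i - y i) ^ 2

lemma sqDist_sub_sqDist {R : Type*} [CommRing R] (x x' y : ι → R) :
    sqDist x y - sqDist x' y = (x ⬝ᵥ x - x' ⬝ᵥ x') + ((2 : R) • (x' - x)) ⬝ᵥ y := by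
  simp only [sqDist, dotProduct, ← sum_sub_distrib, ← sum_add_distrib]
  refine sum_congr rfl fun i _ => ?_
  simp only [Pi.smul_apply, Pi.sub_apply, smul_eq_mul]
  ring

variable {F : Type*} [Field F] [Fintype F] [DecidableEq F] [DecidableEq ι]

lemma AddChar.sum_apply_mul_sqDist_sub_sqDist {ψ : AddChar F ℂ} (hψ : ψ.IsPrimitive)
    (h2 : (2 : F) ≠ 0) {t : F} (ht : t ≠ 0) (x x' : ι → F) :
    ∑ y, ψ (t * (sqDist x y - sqDist x' y)) =
      if x = x' then (Fintype.card F : ℂ) ^ Fintype.card ι else 0 := by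
  have hb : t • (2 : F) • (x' - x) = 0 ↔ x = x' := by
    simp only [smul_eq_zero, ht, h2, sub_eq_zero, false_or, eq_comm]
  have hlin : ∀ y, t * (sqDist x y - sqDist x' y) =
      t * (x ⬝ᵥ x - x' ⬝ᵥ x') + (t • (2 : F) • (x' - x)) ⬝ᵥ y := fun y => by
    simp only [sqDist_sub_sqDist, smul_dotProduct, smul_eq_mul]; ring
  simp_rw [hlin, map_add_eq_mul, ← mul_sum, sum_apply_dotProduct hψ, hb]
  split_ifs with h
  · simp [h]
  · rw [mul_zero]

lemma AddChar.sum_normSq_sum_apply_mul_sqDist {ψ : AddChar F ℂ} (hψ : ψ.IsPrimitive)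
    (h2 : (2 : F) ≠ 0) {t : F} (ht : t ≠ 0) (P : Finset (ι → F)) :
    ∑ y, Complex.normSq (∑ x ∈ P, ψ (t * sqDist x y)) =
      (Fintype.card F : ℝ) ^ Fintype.card ι * #P := by
  suffices h : ∑ y, (Complex.normSq (∑ x ∈ P, ψ (t * sqDist x y)) : ℂ) =
      (Fintype.card F : ℂ) ^ Fintype.card ι * #P by exact_mod_cast h
  simp_rw [normSq_sum_apply, ← mul_sub]
  rw [sum_comm, mul_comm, ← nsmul_eq_mul, ← sum_const]
  refine sum_congr rfl fun x hx => ?_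
  rw [sum_comm]
  simp_rw [sum_apply_mul_sqDist_sub_sqDist hψ h2 ht x]
  rw [sum_ite_eq, if_pos hx]

theorem card_mul_sum_collisions_sqDist_le (h2 : (2 : F) ≠ 0) (P Y : Finset (ι → F)) :
    (Fintype.card F : ℝ) * ∑ y ∈ Y, (collisions P (sqDist · y) : ℝ) ≤
      #Y * #P ^ 2 + (Fintype.card F - 1) * (Fintype.card F : ℝ) ^ Fintype.card ι * #P := by
  set q := Fintype.card F
  set ψ := AddChar.FiniteField.primitiveChar_to_Complex F
  have hψ : ψ.IsPrimitive := AddChar.FiniteField.primitiveChar_to_Complex_isPrimitive F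
  set f : F → (ι → F) → ℝ := fun t y => Complex.normSq (∑ x ∈ P, ψ (t * sqDist x y))
  calc (q : ℝ) * ∑ y ∈ Y, (collisions P (sqDist · y) : ℝ)
      = ∑ t, ∑ y ∈ Y, f t y := by
        rw [mul_sum, sum_comm]
        exact sum_congr rfl fun y _ => (AddChar.sum_normSq_sum_apply_mul hψ P _).symm
    _ = ∑ y ∈ Y, f 0 y + ∑ t ∈ (univ : Finset F).erase 0, ∑ y ∈ Y, f t y :=
        (add_sum_erase _ _ (mem_univ 0)).symm
    _ ≤ #Y * #P ^ 2 + ∑ t ∈ (univ : Finset F).erase 0, (q : ℝ) ^ Fintype.card ι * #P := by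
        gcongr with t ht
        · simp [f, sq]
        · rw [← AddChar.sum_normSq_sum_apply_mul_sqDist hψ h2 (ne_of_mem_erase ht) P]
          exact sum_le_sum_of_subset_of_nonneg (subset_univ Y) fun _ _ _ =>
            Complex.normSq_nonneg _
    _ = #Y * #P ^ 2 + (q - 1) * (q : ℝ) ^ Fintype.card ι * #P := by
        rw [sum_const, card_erase_of_mem (mem_univ 0), card_univ, nsmul_eq_mul,
          Nat.cast_pred Fintype.card_pos, mul_assoc]

end SqDist

lemma one_sub_mul_sub_one_sq_mul_pow_le {q ε N : ℝ} (k : ℕ) (hq : 1 ≤ q) (hε : 0 < ε)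
    (hε1 : ε ≤ 1) (h : √(1 - ε) / ε * (√(q ^ (k + 1 + 1)) - √(q ^ k)) ≤ N) :
    (1 - ε) * (q - 1) ^ 2 * q ^ k ≤ ε ^ 2 * N ^ 2 := by
  have hsqrt : √(q ^ (k + 1 + 1)) - √(q ^ k) = (q - 1) * √(q ^ k) := by
    rw [show q ^ (k + 1 + 1) = q ^ 2 * q ^ k by ring, Real.sqrt_mul (by positivity),
      Real.sqrt_sq (by linarith)]
    ring
  rw [hsqrt] at h
  have h0 : 0 ≤ √(1 - ε) / ε * ((q - 1) * √(q ^ k)) := by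
    have : 0 ≤ q - 1 := by linarith
    positivity
  have hsq := pow_le_pow_left₀ h0 h 2
  rw [mul_pow, div_pow, mul_pow, Real.sq_sqrt (by linarith), Real.sq_sqrt (by positivity),
    div_mul_eq_mul_div, div_le_iff₀ (by positivity)] at hsq
  linarith

lemma one_sub_mul_sub_one_mul_pow_succ_le {q ε N : ℝ} (k : ℕ) (hq : 1 ≤ q) (hε : 0 < ε)
    (hε1 : ε ≤ 1) (hεq : ε * q ≤ q - 1) (h : (1 - ε) * (q - 1) ^ 2 * q ^ k ≤ ε ^ 2 * N ^ 2) :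
    (1 - ε) * ((q - 1) * q ^ (k + 1)) ≤ ε * N ^ 2 := by
  refine le_of_mul_le_mul_left ?_ hε
  have : 0 ≤ 1 - ε := by linarith
  have : 0 ≤ q - 1 := by linarith
  calc ε * ((1 - ε) * ((q - 1) * q ^ (k + 1)))
      = (1 - ε) * (q - 1) * q ^ k * (ε * q) := by ring
    _ ≤ (1 - ε) * (q - 1) * q ^ k * (q - 1) := by gcongr
    _ ≤ ε * (ε * N ^ 2) := by linarith

lemma one_sub_mul_mul_le_of_collision_bounds {q ε N D C A : ℝ} (hN : 0 < N) (hD : 0 ≤ D)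
    (hε1 : ε ≤ 1) (hCS : (N * N) ^ 2 ≤ D * C) (hC : q * C ≤ N * N ^ 2 + A * N)
    (hA : (1 - ε) * A ≤ ε * N ^ 2) :
    (1 - ε) * q * N ≤ D := by
  have hC0 : 0 < C := by
    by_contra! h
    nlinarith [mul_nonpos_of_nonneg_of_nonpos hD h, pow_pos hN 4]
  refine le_of_mul_le_mul_right ?_ hC0
  nlinarith [mul_le_mul_of_nonneg_left hC (by nlinarith : 0 ≤ (1 - ε) * N),
    mul_le_mul_of_nonneg_left hA (sq_nonneg N)]

/-- Pinned distance set lower bound: if `q` is odd and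
`|P| ≥ (√(1−ε)/ε)(q^{(n+1)/2} − q^{(n−1)/2})` then the average pinned distance set size
over pins in `P` is at least `(1 − ε)q`. -/
theorem stmt_17 {F : Type*} [Field F] [Fintype F] [DecidableEq F]
    (hodd : Odd (Fintype.card F)) (n : ℕ) (hn : 1 ≤ n)
    (ε : ℝ) (hε : 0 < ε) (hε1 : ε < 1)
    (P : Finset (Fin n → F))
    (hP : (Real.sqrt (1 - ε) / ε) *
        (Real.sqrt ((Fintype.card F : ℝ) ^ (n + 1)) - Real.sqrt ((Fintype.card F : ℝ) ^ (n - 1)))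
      ≤ P.card) :
    (1 - ε) * (Fintype.card F : ℝ)
      ≤ (∑ y ∈ P, ((P.image (fun x => ∑ i, (x i - y i) ^ 2)).card : ℝ)) / P.card := by
  obtain ⟨k, rfl⟩ := Nat.exists_eq_add_of_le' hn
  have hq : (1 : ℝ) < Fintype.card F := by exact_mod_cast Fintype.one_lt_card
  rw [Nat.add_sub_cancel] at hP
  have hPsq := one_sub_mul_sub_one_sq_mul_pow_le k hq.le hε hε1.le hP
  have hN : (0 : ℝ) < #P := by
    have : 0 < (1 - ε) * (Fintype.card F - 1 : ℝ) ^ 2 * Fintype.card F ^ k := by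
      have := sub_pos.2 hq
      have := sub_pos.2 hε1
      positivity
    exact lt_of_pow_lt_pow_left₀ 2 (Nat.cast_nonneg _) (by nlinarith)
  rw [le_div_iff₀ hN]
  change _ ≤ ∑ y ∈ P, (#(P.image (sqDist · y)) : ℝ)
  rcases le_or_gt ((1 - ε) * Fintype.card F) 1 with hsmall | hlarge
  · calc (1 - ε) * Fintype.card F * #P ≤ 1 * #P := by gcongr
      _ = ∑ _y ∈ P, (1 : ℝ) := by simp
      _ ≤ _ := sum_le_sum fun y hy => by exact_mod_cast card_pos.2 (Nonempty.image ⟨y, hy⟩ _)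
  · have hCS : ((#P * #P) ^ 2 : ℝ) ≤ (∑ y ∈ P, #(P.image (sqDist · y)) : ℝ) *
        ∑ y ∈ P, (collisions P (sqDist · y) : ℝ) := by
      exact_mod_cast sq_card_mul_card_le_sum_card_image_mul_sum_collisions P P fun y x => sqDist x y
    have hcoll := card_mul_sum_collisions_sqDist_le (two_ne_zero_of_odd_card hodd) P P
    rw [Fintype.card_fin] at hcoll
    exact one_sub_mul_mul_le_of_collision_bounds hN (sum_nonneg fun _ _ => Nat.cast_nonneg _)
      hε1.le hCS hcoll (one_sub_mul_sub_one_mul_pow_succ_le k hq.le hε hε1.le (by linarith) hPsq)
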